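/- arXiv:1605.03949 — 5 statements merged into one kernel-verified Lean document; each statement's English description precedes it below -/
import Mathlib

section
/- Let X be any set and S : X × X → [0,1] a similarity (a symmetric function with S(A,A) = 1 for all A). If S admits an LSH scheme, i.e., there is a probability distribution over hash functions h : X → ℕ such that Pr_h[h(A) = h(B)] = S(A,B) for all A, B ∈ X, then the distance d(A,B) = 1 − S(A,B) satisfies the triangle inequality: d(A,C) ≤ d(A,B) + d(B,C) for all A, B, C ∈ X. -/
/-!
Put `d(A, B) := Pr_h[h A ≠ h B] = 1 - S A B`. If `h A ≠ h C` then `h A ≠ h B` or `h B ≠ h C`,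
so the union bound gives `d(A, C) ≤ d(A, B) + d(B, C)`.
-/

namespace PMF

variable {α : Type*}

theorem toOuterMeasure_add_compl (p : PMF α) (s : Set α) :
    p.toOuterMeasure s + p.toOuterMeasure sᶜ = 1 := by
  rw [toOuterMeasure_apply, toOuterMeasure_apply, ← ENNReal.tsum_add]
  simp only [Set.indicator_self_add_compl_apply, tsum_coe]

theorem toOuterMeasure_setOf_ne_le {X β : Type*} (p : PMF (X → β)) (A B C : X) :
    p.toOuterMeasure {h | h A ≠ h C} ≤
      p.toOuterMeasure {h | h A ≠ h B} + p.toOuterMeasure {h | h B ≠ h C} := by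
  have hsub : {h : X → β | h A ≠ h C} ⊆ {h | h A ≠ h B} ∪ {h | h B ≠ h C} := fun h hAC =>
    (em (h A = h B)).elim (fun hAB => Or.inr fun hBC => hAC (hAB.trans hBC)) Or.inl
  exact (MeasureTheory.measure_mono hsub).trans (MeasureTheory.measure_union_le _ _)

theorem toOuterMeasure_setOf_ne_eq_ofReal {X β : Type*} (p : PMF (X → β)) {A B : X} {s : ℝ}
    (hs : 0 ≤ s) (hp : p.toOuterMeasure {h | h A = h B} = ENNReal.ofReal s) :
    p.toOuterMeasure {h | h A ≠ h B} = ENNReal.ofReal (1 - s) := by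
  have hsum := p.toOuterMeasure_add_compl {h | h A = h B}
  rw [hp] at hsum
  rw [ENNReal.ofReal_sub _ hs, ENNReal.ofReal_one, ← hsum,
    ENNReal.add_sub_cancel_left ENNReal.ofReal_ne_top]
  rfl

end PMF

theorem lsh_implies_triangle_inequality_general
    {X : Type*} (S : X → X → ℝ)
    (hrange : ∀ A B : X, S A B ∈ Set.Icc (0 : ℝ) 1)
    (μ : PMF (X → ℕ))
    (hLSH : ∀ A B : X,
      μ.toOuterMeasure {h : X → ℕ | h A = h B} = ENNReal.ofReal (S A B)) :
    ∀ A B C : X, 1 - S A C ≤ (1 - S A B) + (1 - S B C) := by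
  intro A B C
  have hdist : ∀ A B : X, μ.toOuterMeasure {h | h A ≠ h B} = ENNReal.ofReal (1 - S A B) :=
    fun A B => μ.toOuterMeasure_setOf_ne_eq_ofReal (hrange A B).1 (hLSH A B)
  have htri := μ.toOuterMeasure_setOf_ne_le A B C
  rw [hdist, hdist, hdist, ← ENNReal.ofReal_add (by linarith [(hrange A B).2])
    (by linarith [(hrange B C).2])] at htri
  exact (ENNReal.ofReal_le_ofReal_iff (by linarith [(hrange A B).2, (hrange B C).2])).1 htri

/-- If a similarity `S` on `X` (symmetric, `[0,1]`-valued, `S A A = 1`)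
admits an LSH scheme, i.e. a probability distribution over hash functions `h : X → ℕ`
with `Pr_h[h A = h B] = S A B`, then the distance `1 - S` satisfies the triangle
inequality. -/
theorem lsh_implies_triangle_inequality
    {X : Type*} (S : X → X → ℝ)
    (hsymm : ∀ A B : X, S A B = S B A)
    (hrange : ∀ A B : X, S A B ∈ Set.Icc (0 : ℝ) 1)
    (hrefl : ∀ A : X, S A A = 1)
    (μ : PMF (X → ℕ))
    (hLSH : ∀ A B : X,
      μ.toOuterMeasure {h : X → ℕ | h A = h B} = ENNReal.ofReal (S A B)) :
    ∀ A B C : X, 1 - S A C ≤ (1 - S A B) + (1 - S B C) :=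
  lsh_implies_triangle_inequality_general S hrange μ hLSH
end

section
/- Let x, y > 0 and 0 ≤ z < z' with z' ≥ max(x, y, z). Then for every finite universe U, the function d(A,B) = 1 − S_{x,y,z,z'}(A,B) is a metric on the subsets of U: d(A,B) ≥ 0, d(A,B) = 0 if and only if A = B, d(A,B) = d(B,A), and d(A,C) ≤ d(A,B) + d(B,C) for all A, B, C ⊆ U. -/
/-- The rational set similarity `S_{x,y,z,z'}` of `A, B ⊆ U` for a finite universe `U`:
`N(A,B)/D(A,B)` where `N(A,B) = x|A∩B| + y|U∖(A∪B)| + z|A△B|` and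
`D(A,B) = x|A∩B| + y|U∖(A∪B)| + z'|A△B|`, with value `1` when `D(A,B) = 0`. -/
noncomputable def ratSim {U : Type*} [Fintype U] [DecidableEq U]
    (x y z z' : ℝ) (A B : Finset U) : ℝ :=
  if x * ((A ∩ B).card : ℝ) + y * (((A ∪ B)ᶜ : Finset U).card : ℝ)
      + z' * ((symmDiff A B).card : ℝ) = 0 then 1
  else (x * ((A ∩ B).card : ℝ) + y * (((A ∪ B)ᶜ : Finset U).card : ℝ)
      + z * ((symmDiff A B).card : ℝ))
    / (x * ((A ∩ B).card : ℝ) + y * (((A ∪ B)ᶜ : Finset U).card : ℝ)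
      + z' * ((symmDiff A B).card : ℝ))


/-!
Write `m(A, B) = |A △ B|` and `s(A, B) = x |A ∩ B| + y |U ∖ (A ∪ B)|`; then
`1 - S = (z' - z) · m / (s + z' m)`, and `t ↦ t / (s + z' t)` increases in `t` and decreases
in `s`. Since `m(A, C) ≤ m(A, B) + m(B, C) =: M`, the distance `d(A, C)` is at most
`(z' - z) · M / (s(A, C) + z' M)`. Splitting the numerator `M`, each part is bounded by
`d(A, B)` resp. `d(B, C)` because `s(A, B) ≤ s(A, C) + z' m(B, C)`: an element of `A ∩ B`
missing from `A ∩ C` lies in `B ∖ C`, one outside `A ∪ B` but not outside `A ∪ C` lies in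
`C ∖ B`, and `x, y ≤ z'`.
-/

section DivAddMul

variable {k s t : ℝ}

lemma div_add_mul_eq_zero_iff (hk : 0 < k) (hs : 0 ≤ s) (ht : 0 ≤ t) :
    t / (s + k * t) = 0 ↔ t = 0 := by
  refine ⟨fun h => ?_, fun h => by simp [h]⟩
  rcases div_eq_zero_iff.mp h with h | h
  · exact h
  · nlinarith

lemma div_add_mul_le_div_add_mul {t' : ℝ} (hk : 0 < k) (hs : 0 ≤ s) (ht : 0 ≤ t)
    (htt' : t ≤ t') : t / (s + k * t) ≤ t' / (s + k * t') := by
  rcases ht.eq_or_lt with rfl | ht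
  · simp only [mul_zero, add_zero, zero_div]
    exact div_nonneg (by linarith) (by nlinarith)
  · rw [div_le_div_iff₀ (by positivity) (by nlinarith)]
    nlinarith

lemma div_le_div_add_mul_of_le {T : ℝ} (hk : 0 < k) (hs : 0 ≤ s) (ht : 0 ≤ t)
    (hT : s + k * t ≤ T) : t / T ≤ t / (s + k * t) := by
  rcases ht.eq_or_lt with rfl | ht
  · simp
  · exact div_le_div_of_nonneg_left ht.le (by positivity) hT

lemma div_add_mul_le_add {s₁ s₂ s₃ t₁ t₂ t₃ : ℝ} (hk : 0 < k)
    (hs₁ : 0 ≤ s₁) (hs₂ : 0 ≤ s₂) (hs₃ : 0 ≤ s₃) (ht₁ : 0 ≤ t₁) (ht₂ : 0 ≤ t₂) (ht₃ : 0 ≤ t₃)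
    (ht : t₃ ≤ t₁ + t₂) (h₁ : s₁ ≤ s₃ + k * t₂) (h₂ : s₂ ≤ s₃ + k * t₁) :
    t₃ / (s₃ + k * t₃) ≤ t₁ / (s₁ + k * t₁) + t₂ / (s₂ + k * t₂) :=
  calc t₃ / (s₃ + k * t₃)
      ≤ (t₁ + t₂) / (s₃ + k * (t₁ + t₂)) := div_add_mul_le_div_add_mul hk hs₃ ht₃ ht
    _ = t₁ / (s₃ + k * (t₁ + t₂)) + t₂ / (s₃ + k * (t₁ + t₂)) := add_div _ _ _
    _ ≤ t₁ / (s₁ + k * t₁) + t₂ / (s₂ + k * t₂) :=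
      add_le_add (div_le_div_add_mul_of_le hk hs₁ ht₁ (by linarith))
        (div_le_div_add_mul_of_le hk hs₂ ht₂ (by linarith))

end DivAddMul

open Finset
open scoped symmDiff

section SetSimilarity

variable {U : Type*} [Fintype U] [DecidableEq U] {x y k : ℝ}

def agreement (x y : ℝ) (A B : Finset U) : ℝ :=
  x * #(A ∩ B) + y * #((A ∪ B)ᶜ)

lemma agreement_comm (x y : ℝ) (A B : Finset U) : agreement x y A B = agreement x y B A := by
  rw [agreement, agreement, inter_comm, union_comm]

lemma agreement_nonneg (hx : 0 ≤ x) (hy : 0 ≤ y) (A B : Finset U) : 0 ≤ agreement x y A B := by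
  unfold agreement; positivity

lemma agreement_le_add (hx : 0 ≤ x) (hy : 0 ≤ y) (hxk : x ≤ k) (hyk : y ≤ k)
    (A B C : Finset U) : agreement x y A B ≤ agreement x y A C + k * #(B ∆ C) := by
  have hinter : (#(A ∩ B) : ℝ) ≤ #(A ∩ C) + #(B \ C) := by
    exact_mod_cast (card_le_card fun u => by
      simp only [mem_inter, mem_union, mem_sdiff]; tauto).trans (card_union_le _ _)
  have hcompl : (#((A ∪ B)ᶜ) : ℝ) ≤ #((A ∪ C)ᶜ) + #(C \ B) := by
    exact_mod_cast (card_le_card fun u => by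
      simp only [compl_union, mem_inter, mem_compl, mem_union, mem_sdiff]; tauto).trans
      (card_union_le _ _)
  have hsymm : (#(B ∆ C) : ℝ) = #(B \ C) + #(C \ B) := by
    exact_mod_cast card_union_of_disjoint disjoint_sdiff_sdiff
  unfold agreement
  nlinarith [mul_le_mul_of_nonneg_left hinter hx, mul_le_mul_of_nonneg_left hcompl hy,
    mul_le_mul_of_nonneg_right hxk (#(B \ C)).cast_nonneg,
    mul_le_mul_of_nonneg_right hyk (#(C \ B)).cast_nonneg]

noncomputable def symmDiffRatio (x y k : ℝ) (A B : Finset U) : ℝ :=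
  #(A ∆ B) / (agreement x y A B + k * #(A ∆ B))

/-- Where the denominator vanishes, `ratSim` is `1` by convention and the right-hand side
is `0` because `a / 0 = 0`. -/
lemma one_sub_ratSim_eq (x y z z' : ℝ) (A B : Finset U) :
    1 - ratSim x y z z' A B = (z' - z) * symmDiffRatio x y z' A B := by
  rw [symmDiffRatio, mul_div_assoc', agreement, ratSim]
  split_ifs with h
  · rw [h, div_zero, sub_self]
  · rw [one_sub_div h]
    ring_nf

lemma symmDiffRatio_nonneg (hx : 0 ≤ x) (hy : 0 ≤ y) (hk : 0 ≤ k) (A B : Finset U) :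
    0 ≤ symmDiffRatio x y k A B :=
  div_nonneg (by positivity) (add_nonneg (agreement_nonneg hx hy A B) (by positivity))

lemma symmDiffRatio_eq_zero_iff (hx : 0 ≤ x) (hy : 0 ≤ y) (hk : 0 < k) {A B : Finset U} :
    symmDiffRatio x y k A B = 0 ↔ A = B := by
  rw [symmDiffRatio, div_add_mul_eq_zero_iff hk (agreement_nonneg hx hy A B) (by positivity),
    Nat.cast_eq_zero, card_eq_zero, ← bot_eq_empty, symmDiff_eq_bot]

lemma symmDiffRatio_comm (x y k : ℝ) (A B : Finset U) :
    symmDiffRatio x y k A B = symmDiffRatio x y k B A := by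
  rw [symmDiffRatio, symmDiffRatio, agreement_comm, symmDiff_comm]

lemma symmDiffRatio_triangle (hx : 0 ≤ x) (hy : 0 ≤ y) (hxk : x ≤ k) (hyk : y ≤ k) (hk : 0 < k)
    (A B C : Finset U) :
    symmDiffRatio x y k A C ≤ symmDiffRatio x y k A B + symmDiffRatio x y k B C := by
  have hABC : (#(A ∆ C) : ℝ) ≤ #(A ∆ B) + #(B ∆ C) := by
    exact_mod_cast (card_le_card (symmDiff_triangle A B C)).trans (card_union_le _ _)
  have hBA := agreement_le_add hx hy hxk hyk C B A
  rw [agreement_comm x y C B, agreement_comm x y C A, symmDiff_comm B A] at hBA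
  exact div_add_mul_le_add hk (agreement_nonneg hx hy _ _) (agreement_nonneg hx hy _ _)
    (agreement_nonneg hx hy _ _) (by positivity) (by positivity) (by positivity) hABC
    (agreement_le_add hx hy hxk hyk A B C) hBA

end SetSimilarity

theorem one_sub_ratSim_is_metric_general
    (x y z z' : ℝ) (hx : 0 < x) (hy : 0 < y) (hzz' : z < z')
    (hmax : max (max x y) z ≤ z')
    (U : Type*) [Fintype U] [DecidableEq U] :
    (∀ A B : Finset U, 0 ≤ 1 - ratSim x y z z' A B) ∧
    (∀ A B : Finset U, 1 - ratSim x y z z' A B = 0 ↔ A = B) ∧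
    (∀ A B : Finset U, 1 - ratSim x y z z' A B = 1 - ratSim x y z z' B A) ∧
    (∀ A B C : Finset U,
      1 - ratSim x y z z' A C
        ≤ (1 - ratSim x y z z' A B) + (1 - ratSim x y z z' B C)) := by
  have hxz' : x ≤ z' := (le_max_left _ _).trans ((le_max_left _ _).trans hmax)
  have hyz' : y ≤ z' := (le_max_right _ _).trans ((le_max_left _ _).trans hmax)
  have hz' : 0 < z' := hx.trans_le hxz'
  have hgap : 0 < z' - z := sub_pos.mpr hzz'
  simp only [one_sub_ratSim_eq]
  refine ⟨fun A B => ?_, fun A B => ?_, fun A B => ?_, fun A B C => ?_⟩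
  · exact mul_nonneg hgap.le (symmDiffRatio_nonneg hx.le hy.le hz'.le A B)
  · rw [mul_eq_zero, or_iff_right hgap.ne', symmDiffRatio_eq_zero_iff hx.le hy.le hz']
  · rw [symmDiffRatio_comm]
  · rw [← mul_add]
    exact mul_le_mul_of_nonneg_left
      (symmDiffRatio_triangle hx.le hy.le hxz' hyz' hz' A B C) hgap.le

/-- for `x, y > 0`, `0 ≤ z < z'` and `z' ≥ max(x,y,z)`,
`d(A,B) = 1 - S_{x,y,z,z'}(A,B)` is a metric on the subsets of any finite universe. -/
theorem one_sub_ratSim_is_metric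
    (x y z z' : ℝ) (hx : 0 < x) (hy : 0 < y) (hz : 0 ≤ z) (hzz' : z < z')
    (hmax : max (max x y) z ≤ z')
    (U : Type*) [Fintype U] [DecidableEq U] :
    (∀ A B : Finset U, 0 ≤ 1 - ratSim x y z z' A B) ∧
    (∀ A B : Finset U, 1 - ratSim x y z z' A B = 0 ↔ A = B) ∧
    (∀ A B : Finset U, 1 - ratSim x y z z' A B = 1 - ratSim x y z z' B A) ∧
    (∀ A B C : Finset U,
      1 - ratSim x y z z' A C
        ≤ (1 - ratSim x y z z' A B) + (1 - ratSim x y z z' B C)) :=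
  one_sub_ratSim_is_metric_general x y z z' hx hy hzz' hmax U
end

section
/- Let U be a finite universe, x, y, z ≥ 0, A, B ⊆ U, k ∈ ℕ, and let (X_i)_{i∈U} be independent Bernoulli random variables with Pr[X_i = 1] = 2^{-k}. Let N_k = x·Σ_{i∈A∩B} X_i + y·Σ_{i∈U∖(A∪B)} X_i + z·Σ_{i∈A△B} X_i and let N(A,B) = x·|A∩B| + y·|U∖(A∪B)| + z·|A△B| > 0. Then for every ε > 0, Pr[ |N_k − E[N_k]| ≥ ε·E[N_k] ] ≤ max{x+y, z+y, y}·2^k / (ε²·N(A,B)). -/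
/-!
Each `i ∈ U` lies in exactly one of `A ∩ B`, `A △ B`, `U ∖ (A ∪ B)`, so `N_k = ∑ i, c i * X i`
with a weight `c i ∈ {x, z, y}`, and `N(A,B) = ∑ i, c i`. Hence `E[N_k] = 2^{-k} N(A,B)`, and
by independence `Var N_k = ∑ i, c i ^ 2 Var X_i ≤ max{x, y, z} · 2^{-k} N(A,B)`, since
`Var X_i ≤ E[X_i^2] = E[X_i]` for a `{0,1}`-valued variable. Chebyshev's inequality at
distance `ε E[N_k]` then gives the bound.
-/

open MeasureTheory ProbabilityTheory

section ZeroOne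

variable {Ω : Type*} [MeasurableSpace Ω] {μ : Measure Ω} {X : Ω → ℝ}

lemma memLp_of_forall_eq_zero_or_one [IsFiniteMeasure μ] (hX : Measurable X)
    (h01 : ∀ ω, X ω = 0 ∨ X ω = 1) (p : ENNReal) : MemLp X p μ :=
  memLp_of_bounded (a := 0) (b := 1)
    (Filter.Eventually.of_forall fun ω => by rcases h01 ω with h | h <;> simp [h])
    hX.aestronglyMeasurable p

lemma integral_of_forall_eq_zero_or_one (hX : Measurable X) (h01 : ∀ ω, X ω = 0 ∨ X ω = 1) :
    ∫ ω, X ω ∂μ = μ.real {ω | X ω = 1} := by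
  have hX_eq : X = {ω | X ω = 1}.indicator 1 := funext fun ω => by
    rcases h01 ω with h | h <;> simp [h]
  calc ∫ ω, X ω ∂μ = ∫ ω, {ω | X ω = 1}.indicator 1 ω ∂μ := by rw [← hX_eq]
    _ = μ.real {ω | X ω = 1} := integral_indicator_one (hX (measurableSet_singleton 1))

lemma variance_le_integral_of_forall_eq_zero_or_one [IsProbabilityMeasure μ] (hX : Measurable X)
    (h01 : ∀ ω, X ω = 0 ∨ X ω = 1) : variance X μ ≤ ∫ ω, X ω ∂μ := by
  have hsq : X ^ 2 = X := funext fun ω => by rcases h01 ω with h | h <;> simp [h]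
  rw [variance_eq_sub (memLp_of_forall_eq_zero_or_one hX h01 2), hsq]
  nlinarith [sq_nonneg (μ[X])]

end ZeroOne

section WeightedSum

variable {Ω ι : Type*} [MeasurableSpace Ω] {μ : Measure Ω} [Fintype ι] {X : ι → Ω → ℝ}
  {c : ι → ℝ} {p : ℝ}

lemma integral_sum_mul_of_integral_eq (hX : ∀ i, Integrable (X i) μ)
    (hmean : ∀ i, ∫ ω, X i ω ∂μ = p) : ∫ ω, ∑ i, c i * X i ω ∂μ = p * ∑ i, c i := by
  rw [integral_finsetSum _ fun i _ => (hX i).const_mul _]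
  simp only [integral_const_mul, hmean]
  rw [← Finset.sum_mul, mul_comm]

lemma variance_sum_mul_le (hX : ∀ i, MemLp (X i) 2 μ) (hindep : iIndepFun X μ) {M : ℝ}
    (hc : ∀ i, 0 ≤ c i ∧ c i ≤ M) (hvar : ∀ i, variance (X i) μ ≤ p) :
    variance (fun ω => ∑ i, c i * X i ω) μ ≤ M * (p * ∑ i, c i) := by
  rw [← Finset.sum_fn, IndepFun.variance_sum (fun i _ => (hX i).const_mul (c i)) fun i _ j _ hij =>
    (hindep.indepFun hij).comp (measurable_const_mul (c i)) (measurable_const_mul (c j)),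
    Finset.mul_sum, Finset.mul_sum]
  refine Finset.sum_le_sum fun i _ => ?_
  obtain ⟨hc0, hcM⟩ := hc i
  have hp : 0 ≤ p := (variance_nonneg (X i) μ).trans (hvar i)
  calc variance (fun ω => c i * X i ω) μ = c i ^ 2 * variance (X i) μ := variance_const_mul _ _ _
    _ ≤ c i * c i * p := by rw [sq]; gcongr; exact hvar i
    _ ≤ M * (p * c i) := by nlinarith [mul_le_mul_of_nonneg_right hcM (mul_nonneg hc0 hp)]

end WeightedSum

lemma meas_ge_mul_integral_le {Ω : Type*} [MeasurableSpace Ω] {μ : Measure Ω} [IsFiniteMeasure μ]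
    {N : Ω → ℝ} (hN : MemLp N 2 μ) {p S M ε : ℝ} (hp : 0 < p) (hS : 0 < S) (hε : 0 < ε)
    (hmean : ∫ ω, N ω ∂μ = p * S) (hvar : variance N μ ≤ M * (p * S)) :
    μ {ω | ε * ∫ ω', N ω' ∂μ ≤ |N ω - ∫ ω', N ω' ∂μ|}
      ≤ ENNReal.ofReal (M / p / (ε ^ 2 * S)) := by
  refine (meas_ge_le_variance_div_sq hN (by rw [hmean]; positivity)).trans
    (ENNReal.ofReal_le_ofReal ?_)
  calc variance N μ / (ε * ∫ ω, N ω ∂μ) ^ 2 ≤ M * (p * S) / (ε * (p * S)) ^ 2 := by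
        rw [hmean]; gcongr
    _ = M / p / (ε ^ 2 * S) := by field_simp

section Regions

variable {U : Type*} [DecidableEq U]

def regionWeight (x y z : ℝ) (A B : Finset U) (i : U) : ℝ :=
  if i ∈ A ∩ B then x else if i ∈ symmDiff A B then z else y

lemma sum_regionWeight_mul [Fintype U] (x y z : ℝ) (A B : Finset U) (f : U → ℝ) :
    ∑ i, regionWeight x y z A B i * f i = x * ∑ i ∈ A ∩ B, f i
      + y * ∑ i ∈ (A ∪ B)ᶜ, f i + z * ∑ i ∈ symmDiff A B, f i := by
  have key : ∀ s : Finset U, ∑ i ∈ s, f i = ∑ i, if i ∈ s then f i else 0 := fun s => by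
    rw [Finset.sum_ite_mem, Finset.univ_inter]
  simp only [key, Finset.mul_sum, ← Finset.sum_add_distrib]
  refine Finset.sum_congr rfl fun i _ => ?_
  unfold regionWeight
  by_cases ha : i ∈ A <;> by_cases hb : i ∈ B <;> simp [ha, hb, Finset.mem_symmDiff]

lemma regionWeight_mem_Icc {x y z : ℝ} (hx : 0 ≤ x) (hy : 0 ≤ y) (hz : 0 ≤ z) (A B : Finset U)
    (i : U) : 0 ≤ regionWeight x y z A B i ∧ regionWeight x y z A B i ≤ max (max x z) y := by
  unfold regionWeight
  split_ifs <;> constructor <;> first | assumption | simp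

end Regions

/-- Chebyshev-type deviation bound for the sampled numerator
`N_k = x·Σ_{i∈A∩B} X_i + y·Σ_{i∈U∖(A∪B)} X_i + z·Σ_{i∈A△B} X_i`, where the
`X_i` are independent Bernoulli(`2^{-k}`) random variables:
for every `ε > 0`, `Pr[|N_k − E[N_k]| ≥ ε·E[N_k]] ≤ max{x+y, z+y, y}·2^k / (ε²·N(A,B))`,
where `N(A,B) = x|A∩B| + y|U∖(A∪B)| + z|A△B| > 0`. -/
theorem sampled_numerator_chebyshev
    {U : Type*} [Fintype U] [DecidableEq U]
    (x y z : ℝ) (hx : 0 ≤ x) (hy : 0 ≤ y) (hz : 0 ≤ z)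
    (A B : Finset U) (k : ℕ)
    {Ω : Type*} [MeasurableSpace Ω] (μ : Measure Ω) [IsProbabilityMeasure μ]
    (X : U → Ω → ℝ) (hmeas : ∀ i, Measurable (X i))
    (hindep : iIndepFun X μ)
    (h01 : ∀ i ω, X i ω = 0 ∨ X i ω = 1)
    (hq : ∀ i, μ {ω | X i ω = 1} = ENNReal.ofReal ((1 / 2 : ℝ) ^ k))
    (Nk : Ω → ℝ)
    (hNk : ∀ ω, Nk ω = x * ∑ i ∈ A ∩ B, X i ω
      + y * ∑ i ∈ ((A ∪ B)ᶜ : Finset U), X i ω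
      + z * ∑ i ∈ symmDiff A B, X i ω)
    (NAB : ℝ)
    (hNAB : NAB = x * ((A ∩ B).card : ℝ)
      + y * (((A ∪ B)ᶜ : Finset U).card : ℝ) + z * ((symmDiff A B).card : ℝ))
    (hNpos : 0 < NAB)
    (ε : ℝ) (hε : 0 < ε) :
    μ {ω | ε * (∫ ω', Nk ω' ∂μ) ≤ |Nk ω - ∫ ω', Nk ω' ∂μ|}
      ≤ ENNReal.ofReal (max (max (x + y) (z + y)) y * 2 ^ k / (ε ^ 2 * NAB)) := by
  set p : ℝ := (1 / 2 : ℝ) ^ k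
  set c := regionWeight x y z A B
  have hXmem (i : U) : MemLp (X i) 2 μ := memLp_of_forall_eq_zero_or_one (hmeas i) (h01 i) 2
  have hXmean (i : U) : ∫ ω, X i ω ∂μ = p := by
    rw [integral_of_forall_eq_zero_or_one (hmeas i) (h01 i), measureReal_def, hq,
      ENNReal.toReal_ofReal (by positivity)]
  have hNk_eq : Nk = fun ω => ∑ i, c i * X i ω :=
    funext fun ω => by rw [hNk, sum_regionWeight_mul]
  have hNAB_eq : NAB = ∑ i, c i := by simpa [hNAB] using (sum_regionWeight_mul x y z A B 1).symm
  have hmean : ∫ ω, Nk ω ∂μ = p * NAB := by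
    rw [hNk_eq, hNAB_eq]
    exact integral_sum_mul_of_integral_eq (fun i => (hXmem i).integrable one_le_two) hXmean
  have hvar : variance Nk μ ≤ max (max x z) y * (p * NAB) := by
    rw [hNk_eq, hNAB_eq]
    exact variance_sum_mul_le hXmem hindep (regionWeight_mem_Icc hx hy hz A B) fun i =>
      (variance_le_integral_of_forall_eq_zero_or_one (hmeas i) (h01 i)).trans_eq (hXmean i)
  have hNk_mem : MemLp Nk 2 μ := hNk_eq ▸ memLp_finsetSum _ fun i _ => (hXmem i).const_mul (c i)
  calc _ ≤ ENNReal.ofReal (max (max x z) y / p / (ε ^ 2 * NAB)) :=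
        meas_ge_mul_integral_le hNk_mem (by positivity) hNpos hε hmean hvar
    _ ≤ _ := by
        refine ENNReal.ofReal_le_ofReal ?_
        have hp_inv : p⁻¹ = 2 ^ k := by simp [p]
        rw [div_eq_mul_inv _ p, hp_inv]
        gcongr <;> linarith
end

section
/- Let 0 < ε, δ, r < 1, let x, y ≥ 0 and 0 ≤ z ≤ z' with z' ≥ max(x, y, z), and let A, B be subsets of a finite universe U with S_{x,y,z,z'}(A,B) ≥ r. Fix k ∈ ℕ and let (X_i)_{i∈U} be independent Bernoulli random variables with Pr[X_i = 1] = 2^{-k}, S_k = {i : X_i = 1}, A_k = A ∩ S_k, B_k = B ∩ S_k. If 2^k ≤ (ε/5)²·δ·r·N(A,B) / max{x+y, z'+y, z+y}, then with probability at least 1 − 2δ, (1−ε)·S_{x,y,z,z'}(A,B) ≤ S_{x,y,z,z'}(A_k, B_k) ≤ (1+ε)·S_{x,y,z,z'}(A,B), where S_{x,y,z,z'}(A_k, B_k) is the rational set similarity of A_k and B_k computed with respect to the universe S_k. -/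
/-!
The numerator `N_k` and denominator `D_k` of the sampled similarity are weighted sums `∑ cᵢ Xᵢ`
of the independent Bernoulli(`p = 2^{-k}`) indicators, with weights `cᵢ ∈ {x, y, z}`
(resp. `{x, y, z'}`) bounded by `M = max {x + y, z' + y, z + y}`. So `N_k` has mean `p N` and
variance at most `p M N`, and likewise for `D_k`. By Chebyshev, the sampling condition
`2^k M ≤ (ε/5)² δ r N` makes each of them deviate from its mean by a relative error `ε/5` with
probability at most `δ`; outside these two events `N_k / D_k` is within a factor `1 ± ε` of `N / D`.
-/

open MeasureTheory ProbabilityTheory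

/-- The rational set similarity of `A, B` computed with respect to the universe `V`:
`N/D` with `N = x|A∩B| + y|V∖(A∪B)| + z|A△B|`, `D = x|A∩B| + y|V∖(A∪B)| + z'|A△B|`,
and value `1` when `D = 0`. -/
noncomputable def ratSimOn {α : Type*} [DecidableEq α]
    (x y z z' : ℝ) (V A B : Finset α) : ℝ :=
  if x * ((A ∩ B).card : ℝ) + y * ((V \ (A ∪ B)).card : ℝ)
      + z' * ((symmDiff A B).card : ℝ) = 0 then 1
  else (x * ((A ∩ B).card : ℝ) + y * ((V \ (A ∪ B)).card : ℝ)
      + z * ((symmDiff A B).card : ℝ))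
    / (x * ((A ∩ B).card : ℝ) + y * ((V \ (A ∪ B)).card : ℝ)
      + z' * ((symmDiff A B).card : ℝ))

open Finset

section Combinatorics

variable {α : Type*} [DecidableEq α]

noncomputable def simForm (x y w : ℝ) (V A B : Finset α) : ℝ :=
  x * ((A ∩ B).card : ℝ) + y * ((V \ (A ∪ B)).card : ℝ) + w * ((symmDiff A B).card : ℝ)

lemma ratSimOn_eq_div {x y z z' : ℝ} {V A B : Finset α} (h : simForm x y z' V A B ≠ 0) :
    ratSimOn x y z z' V A B = simForm x y z V A B / simForm x y z' V A B :=
  if_neg h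

lemma simForm_le_simForm {x y w w' : ℝ} (hw : w ≤ w') (V A B : Finset α) :
    simForm x y w V A B ≤ simForm x y w' V A B := by
  unfold simForm; gcongr

noncomputable def simWeight (x y w : ℝ) (A B : Finset α) (i : α) : ℝ :=
  if i ∈ A ∩ B then x else if i ∈ A ∪ B then w else y

lemma simWeight_nonneg {x y w : ℝ} (hx : 0 ≤ x) (hy : 0 ≤ y) (hw : 0 ≤ w) (A B : Finset α)
    (i : α) : 0 ≤ simWeight x y w A B i := by
  unfold simWeight; split_ifs <;> assumption

lemma simWeight_le {x y w M : ℝ} (hx : x ≤ M) (hy : y ≤ M) (hw : w ≤ M) (A B : Finset α)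
    (i : α) : simWeight x y w A B i ≤ M := by
  unfold simWeight; split_ifs <;> assumption

lemma simForm_inter_eq_sum (x y w : ℝ) (S A B : Finset α) :
    simForm x y w S (A ∩ S) (B ∩ S) = ∑ i ∈ S, simWeight x y w A B i := by
  have hweight : ∀ i, simWeight x y w A B i = x * (if i ∈ A ∩ B then 1 else 0)
      + y * (if i ∉ A ∪ B then 1 else 0) + w * (if i ∈ symmDiff A B then 1 else 0) := by
    intro i
    by_cases hA : i ∈ A <;> by_cases hB : i ∈ B <;> simp [simWeight, mem_symmDiff, hA, hB]
  simp only [sum_congr rfl fun i _ => hweight i, sum_add_distrib, ← mul_sum, sum_boole]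
  have hinter : (A ∩ S) ∩ (B ∩ S) = S.filter (· ∈ A ∩ B) := by
    ext; simp only [mem_inter, mem_filter]; tauto
  have hout : S \ (A ∩ S ∪ B ∩ S) = S.filter (· ∉ A ∪ B) := by
    ext; simp only [mem_sdiff, mem_union, mem_inter, mem_filter]; tauto
  have hsymm : symmDiff (A ∩ S) (B ∩ S) = S.filter (· ∈ symmDiff A B) := by
    ext; simp only [mem_symmDiff, mem_inter, mem_filter]; tauto
  rw [simForm, hinter, hout, hsymm]

lemma simForm_univ [Fintype α] (x y w : ℝ) (A B : Finset α) :
    simForm x y w univ A B = ∑ i, simWeight x y w A B i := by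
  simpa using simForm_inter_eq_sum x y w univ A B

lemma simForm_inter_eq_sum_mul [Fintype α] (x y w : ℝ) {S : Finset α} (A B : Finset α)
    {ξ : α → ℝ} (hξ : ∀ i, ξ i = if i ∈ S then 1 else 0) :
    simForm x y w S (A ∩ S) (B ∩ S) = ∑ i, simWeight x y w A B i * ξ i := by
  simp only [simForm_inter_eq_sum, hξ, mul_ite, mul_one, mul_zero, Fintype.sum_ite_mem]

end Combinatorics

section Bernoulli

variable {Ω : Type*} [MeasurableSpace Ω] {μ : Measure Ω} {f : Ω → ℝ} {p : ℝ}

lemma memLp_two_of_forall_eq_zero_or_one [IsFiniteMeasure μ] (hf : Measurable f)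
    (h01 : ∀ ω, f ω = 0 ∨ f ω = 1) : MemLp f 2 μ := by
  refine memLp_of_bounded (a := 0) (b := 1) (ae_of_all _ fun ω => ?_) hf.aestronglyMeasurable 2
  rcases h01 ω with h | h <;> simp [h]

lemma integral_of_forall_eq_zero_or_one_s14 (hf : Measurable f) (h01 : ∀ ω, f ω = 0 ∨ f ω = 1)
    (hp : 0 ≤ p) (hq : μ {ω | f ω = 1} = ENNReal.ofReal p) : μ[f] = p := by
  have hind : f = {ω | f ω = 1}.indicator 1 := by
    funext ω; rcases h01 ω with h | h <;> simp [h]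
  have hmeas : MeasurableSet {ω | f ω = 1} := hf (measurableSet_singleton 1)
  rw [hind, integral_indicator_one hmeas, measureReal_def, hq, ENNReal.toReal_ofReal hp]

lemma variance_of_forall_eq_zero_or_one [IsProbabilityMeasure μ] (hf : Measurable f)
    (h01 : ∀ ω, f ω = 0 ∨ f ω = 1) (hp : 0 ≤ p) (hq : μ {ω | f ω = 1} = ENNReal.ofReal p) :
    variance f μ = p - p ^ 2 := by
  have hsq : f ^ 2 = f := by funext ω; rcases h01 ω with h | h <;> simp [h]
  rw [variance_eq_sub (memLp_two_of_forall_eq_zero_or_one hf h01), hsq,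
    integral_of_forall_eq_zero_or_one_s14 hf h01 hp hq]

end Bernoulli

section WeightedBernoulliSum

variable {Ω ι : Type*} [MeasurableSpace Ω] {μ : Measure Ω} [IsProbabilityMeasure μ] [Fintype ι]
  {X : ι → Ω → ℝ} {p : ℝ} (hX : ∀ i, Measurable (X i)) (h01 : ∀ i ω, X i ω = 0 ∨ X i ω = 1)
  (hq : ∀ i, μ {ω | X i ω = 1} = ENNReal.ofReal p)
include hX h01

lemma memLp_two_weighted_sum (c : ι → ℝ) : MemLp (fun ω => ∑ i, c i * X i ω) 2 μ :=
  memLp_finsetSum univ fun i _ =>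
    (memLp_two_of_forall_eq_zero_or_one (hX i) (h01 i)).const_mul (c i)

include hq

lemma integral_weighted_sum (hp : 0 ≤ p) (c : ι → ℝ) :
    μ[fun ω => ∑ i, c i * X i ω] = p * ∑ i, c i := by
  have hmean : ∀ i, μ[X i] = p := fun i =>
    integral_of_forall_eq_zero_or_one_s14 (hX i) (h01 i) hp (hq i)
  rw [integral_finsetSum _ fun i _ =>
    ((memLp_two_of_forall_eq_zero_or_one (hX i) (h01 i)).integrable one_le_two).const_mul (c i)]
  simp only [integral_const_mul, hmean, ← sum_mul, mul_comm p]

lemma variance_weighted_sum_le (hindep : iIndepFun X μ) (hp : 0 ≤ p) {c : ι → ℝ} {M : ℝ}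
    (hc0 : ∀ i, 0 ≤ c i) (hcM : ∀ i, c i ≤ M) :
    variance (fun ω => ∑ i, c i * X i ω) μ ≤ p * M * ∑ i, c i := by
  have hvar : variance (fun ω => ∑ i, c i * X i ω) μ = ∑ i, c i ^ 2 * (p - p ^ 2) := by
    rw [show (fun ω => ∑ i, c i * X i ω) = ∑ i, fun ω => c i * X i ω by ext; simp,
      IndepFun.variance_sum
        (fun i _ => (memLp_two_of_forall_eq_zero_or_one (hX i) (h01 i)).const_mul (c i))
        fun i _ j _ hij => (hindep.indepFun hij).comp
          (measurable_const_mul (c i)) (measurable_const_mul (c j))]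
    simp only [variance_const_mul, variance_of_forall_eq_zero_or_one (hX _) (h01 _) hp (hq _)]
  rw [hvar, mul_sum]
  refine sum_le_sum fun i _ => ?_
  have hsq : c i ^ 2 ≤ M * c i := by nlinarith [hc0 i, hcM i]
  nlinarith [mul_le_mul_of_nonneg_right hsq hp, sq_nonneg p, sq_nonneg (c i)]

/-- Chebyshev's inequality for `∑ cᵢ Xᵢ`, whose mean is `p ∑ cᵢ` and variance at most
`p M ∑ cᵢ`. -/
lemma measure_rel_deviation_weighted_sum_le (hindep : iIndepFun X μ) (hp : 0 < p)
    {c : ι → ℝ} {M t δ : ℝ} (hc0 : ∀ i, 0 ≤ c i) (hcM : ∀ i, c i ≤ M) (ht : 0 < t)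
    (hC : 0 < ∑ i, c i) (hM : M ≤ t ^ 2 * δ * p * ∑ i, c i) :
    μ {ω | t * (p * ∑ i, c i) ≤ |∑ i, c i * X i ω - p * ∑ i, c i|} ≤ ENNReal.ofReal δ := by
  have hcheb := meas_ge_le_variance_div_sq (memLp_two_weighted_sum (μ := μ) hX h01 c)
    (by positivity : 0 < t * (p * ∑ i, c i))
  rw [integral_weighted_sum hX h01 hq hp.le] at hcheb
  refine hcheb.trans (ENNReal.ofReal_le_ofReal ?_)
  rw [div_le_iff₀ (by positivity)]
  calc variance (fun ω => ∑ i, c i * X i ω) μ ≤ p * M * ∑ i, c i :=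
        variance_weighted_sum_le hX h01 hq hindep hp.le hc0 hcM
    _ ≤ p * (t ^ 2 * δ * p * ∑ i, c i) * ∑ i, c i := by gcongr
    _ = δ * (t * (p * ∑ i, c i)) ^ 2 := by ring

end WeightedBernoulliSum

lemma pos_of_abs_sub_lt_mul {η d D : ℝ} (hη0 : 0 ≤ η) (hη1 : η ≤ 1) (h : |d - D| < η * D) :
    0 < d := by
  have hD : 0 < D := pos_of_mul_pos_right ((abs_nonneg _).trans_lt h) hη0
  nlinarith [(abs_lt.1 h).1]

lemma le_div_and_div_le_of_abs_sub_lt {ε n d N D : ℝ} (hε0 : 0 ≤ ε) (hε1 : ε ≤ 1)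
    (hn : |n - N| < ε / 5 * N) (hd : |d - D| < ε / 5 * D) :
    (1 - ε) * (N / D) ≤ n / d ∧ n / d ≤ (1 + ε) * (N / D) := by
  obtain ⟨hn₁, hn₂⟩ := abs_lt.1 hn
  obtain ⟨hd₁, hd₂⟩ := abs_lt.1 hd
  have hN : 0 < N := pos_of_mul_pos_right ((abs_nonneg _).trans_lt hn) (by positivity)
  have hD : 0 < D := pos_of_mul_pos_right ((abs_nonneg _).trans_lt hd) (by positivity)
  have hd : 0 < d := pos_of_abs_sub_lt_mul (by positivity) (by linarith) hd
  have hND : 0 < N * D := mul_pos hN hD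
  rw [mul_div_assoc', mul_div_assoc', div_le_div_iff₀ hD hd, div_le_div_iff₀ hd hD]
  constructor
  · calc (1 - ε) * N * d ≤ (1 - ε) * N * ((1 + ε / 5) * D) := by gcongr; linarith
      _ ≤ (1 - ε / 5) * N * D := by nlinarith
      _ ≤ n * D := by gcongr; linarith
  · calc n * D ≤ (1 + ε / 5) * N * D := by gcongr; linarith
      _ ≤ (1 + ε) * N * ((1 - ε / 5) * D) := by
          nlinarith [mul_nonneg (mul_nonneg hε0 (by linarith : 0 ≤ 3 - ε)) hND.le]
      _ ≤ (1 + ε) * N * d := by gcongr; linarith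

lemma pos_and_le_of_two_pow_le_div {a r N M : ℝ} (k : ℕ) (ha : 0 ≤ a) (hr0 : 0 ≤ r)
    (hr1 : r ≤ 1) (hM : 0 ≤ M) (hk : 2 ^ k ≤ a * r * N / M) :
    0 < N ∧ M ≤ a * (1 / 2) ^ k * N := by
  have hMpos : 0 < M := hM.lt_of_ne fun h => by
    rw [← h, div_zero] at hk
    exact (pow_pos two_pos k).not_ge hk
  have hkM : 2 ^ k * M ≤ a * r * N := (le_div_iff₀ hMpos).1 hk
  have hN : 0 < N := pos_of_mul_pos_right ((by positivity : (0 : ℝ) < 2 ^ k * M).trans_le hkM)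
    (mul_nonneg ha hr0)
  refine ⟨hN, ?_⟩
  calc M = (1 / 2) ^ k * (2 ^ k * M) := by rw [← mul_assoc, ← mul_pow]; norm_num
    _ ≤ (1 / 2) ^ k * (a * r * N) := by gcongr
    _ ≤ (1 / 2) ^ k * (a * 1 * N) := by gcongr
    _ = a * (1 / 2) ^ k * N := by ring

lemma ofReal_one_sub_le_measure_of_forall_mem_or {Ω : Type*} [MeasurableSpace Ω]
    {μ : Measure Ω} [IsProbabilityMeasure μ] {E F G : Set Ω} {a b : ℝ} (ha : 0 ≤ a) (hb : 0 ≤ b)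
    (hE : μ E ≤ ENNReal.ofReal a) (hF : μ F ≤ ENNReal.ofReal b)
    (hG : ∀ ω, ω ∉ E → ω ∉ F → ω ∈ G) :
    ENNReal.ofReal (1 - (a + b)) ≤ μ G := by
  have hcover : (1 : ENNReal) ≤ ENNReal.ofReal (a + b) + μ G :=
    calc (1 : ENNReal) = μ Set.univ := measure_univ.symm
      _ ≤ μ (E ∪ F ∪ G) := measure_mono fun ω _ => by
          by_cases hωE : ω ∈ E <;> by_cases hωF : ω ∈ F <;> simp [hωE, hωF, hG]
      _ ≤ μ E + μ F + μ G := (measure_union_le _ _).trans (by gcongr; exact measure_union_le _ _)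
      _ ≤ ENNReal.ofReal a + ENNReal.ofReal b + μ G := by gcongr
      _ = ENNReal.ofReal (a + b) + μ G := by rw [ENNReal.ofReal_add ha hb]
  rw [ENNReal.ofReal_sub _ (add_nonneg ha hb), ENNReal.ofReal_one]
  exact tsub_le_iff_left.2 hcover

theorem sampled_ratSim_approx_general
    (ε δ r : ℝ) (hε : 0 < ε) (hε1 : ε < 1) (hδ : 0 < δ)
    (hr : 0 < r) (hr1 : r < 1)
    (x y z z' : ℝ) (hx : 0 ≤ x) (hy : 0 ≤ y) (hz : 0 ≤ z) (hzz' : z ≤ z')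
    {U : Type*} [Fintype U] [DecidableEq U] (A B : Finset U)
    (k : ℕ)
    {Ω : Type*} [MeasurableSpace Ω] (μ : Measure Ω) [IsProbabilityMeasure μ]
    (X : U → Ω → ℝ) (hmeas : ∀ i, Measurable (X i))
    (hindep : iIndepFun X μ)
    (h01 : ∀ i ω, X i ω = 0 ∨ X i ω = 1)
    (hq : ∀ i, μ {ω | X i ω = 1} = ENNReal.ofReal ((1 / 2 : ℝ) ^ k))
    (Sk : Ω → Finset U) (hSk : ∀ ω i, i ∈ Sk ω ↔ X i ω = 1)
    (hk : (2 : ℝ) ^ k ≤ (ε / 5) ^ 2 * δ * r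
        * (x * ((A ∩ B).card : ℝ) + y * (((A ∪ B)ᶜ : Finset U).card : ℝ)
            + z * ((symmDiff A B).card : ℝ))
        / max (max (x + y) (z' + y)) (z + y)) :
    ENNReal.ofReal (1 - 2 * δ)
      ≤ μ {ω | (1 - ε) * ratSimOn x y z z' (Finset.univ : Finset U) A B
              ≤ ratSimOn x y z z' (Sk ω) (A ∩ Sk ω) (B ∩ Sk ω)
            ∧ ratSimOn x y z z' (Sk ω) (A ∩ Sk ω) (B ∩ Sk ω)
              ≤ (1 + ε) * ratSimOn x y z z' (Finset.univ : Finset U) A B} := by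
  set p : ℝ := (1 / 2) ^ k
  set M := max (max (x + y) (z' + y)) (z + y)
  set N := simForm x y z univ A B
  set D := simForm x y z' univ A B
  have hz' : 0 ≤ z' := hz.trans hzz'
  obtain ⟨hxM, hyM, hzM, hz'M⟩ : x ≤ M ∧ y ≤ M ∧ z ≤ M ∧ z' ≤ M := by
    simp only [M, le_max_iff]; grind
  have hkN : (2 : ℝ) ^ k ≤ (ε / 5) ^ 2 * δ * r * N / M := by rwa [compl_eq_univ_sdiff] at hk
  obtain ⟨hN, hMN⟩ := pos_and_le_of_two_pow_le_div k (by positivity) hr.le hr1.le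
    ((add_nonneg hz hy).trans (le_max_right _ _)) hkN
  have hND : N ≤ D := simForm_le_simForm hzz' univ A B
  have hbad : ∀ w, 0 ≤ w → w ≤ M → N ≤ simForm x y w univ A B →
      μ {ω | ε / 5 * (p * simForm x y w univ A B)
        ≤ |∑ i, simWeight x y w A B i * X i ω - p * simForm x y w univ A B|}
        ≤ ENNReal.ofReal δ := by
    intro w hw hwM hNw
    rw [simForm_univ] at hNw ⊢
    exact measure_rel_deviation_weighted_sum_le hmeas h01 hq hindep (by positivity)
      (simWeight_nonneg hx hy hw A B) (simWeight_le hxM hyM hwM A B) (by positivity)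
      (hN.trans_le hNw) (hMN.trans (by gcongr))
  have hsample : ∀ w ω, simForm x y w (Sk ω) (A ∩ Sk ω) (B ∩ Sk ω)
      = ∑ i, simWeight x y w A B i * X i ω := fun w ω =>
    simForm_inter_eq_sum_mul x y w A B fun i => by rcases h01 i ω with h | h <;> simp [hSk, h]
  rw [two_mul]
  refine ofReal_one_sub_le_measure_of_forall_mem_or hδ.le hδ.le (hbad z hz hzM le_rfl)
    (hbad z' hz' hz'M hND) fun ω hωN hωD => ?_
  simp only [Set.mem_ofPred_eq, not_le, ← hsample] at hωN hωD
  have hp : 0 < p := by positivity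
  rw [Set.mem_ofPred_eq, ratSimOn_eq_div (hN.trans_le hND).ne',
    ratSimOn_eq_div (pos_of_abs_sub_lt_mul (by positivity) (by linarith) hωD).ne',
    ← mul_div_mul_left N D hp.ne']
  exact le_div_and_div_le_of_abs_sub_lt hε.le hε1.le hωN hωD

/-- subsampling preserves a metric rational set similarity up to a
`(1±ε)` factor with probability at least `1 - 2δ`, provided `S_{x,y,z,z'}(A,B) ≥ r`
and `2^k ≤ (ε/5)²·δ·r·N(A,B) / max{x+y, z'+y, z+y}`. Here `S_k = {i : X_i = 1}` for
independent Bernoulli(`2^{-k}`) variables `X_i`, `A_k = A ∩ S_k`, `B_k = B ∩ S_k`, and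
the sampled similarity is computed with respect to the universe `S_k`. -/
theorem sampled_ratSim_approx
    (ε δ r : ℝ) (hε : 0 < ε) (hε1 : ε < 1) (hδ : 0 < δ) (hδ1 : δ < 1)
    (hr : 0 < r) (hr1 : r < 1)
    (x y z z' : ℝ) (hx : 0 ≤ x) (hy : 0 ≤ y) (hz : 0 ≤ z) (hzz' : z ≤ z')
    (hmax : max (max x y) z ≤ z')
    {U : Type*} [Fintype U] [DecidableEq U] (A B : Finset U)
    (hsim : r ≤ ratSimOn x y z z' (Finset.univ : Finset U) A B)
    (k : ℕ)
    {Ω : Type*} [MeasurableSpace Ω] (μ : Measure Ω) [IsProbabilityMeasure μ]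
    (X : U → Ω → ℝ) (hmeas : ∀ i, Measurable (X i))
    (hindep : iIndepFun X μ)
    (h01 : ∀ i ω, X i ω = 0 ∨ X i ω = 1)
    (hq : ∀ i, μ {ω | X i ω = 1} = ENNReal.ofReal ((1 / 2 : ℝ) ^ k))
    (Sk : Ω → Finset U) (hSk : ∀ ω i, i ∈ Sk ω ↔ X i ω = 1)
    (hk : (2 : ℝ) ^ k ≤ (ε / 5) ^ 2 * δ * r
        * (x * ((A ∩ B).card : ℝ) + y * (((A ∪ B)ᶜ : Finset U).card : ℝ)
            + z * ((symmDiff A B).card : ℝ))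
        / max (max (x + y) (z' + y)) (z + y)) :
    ENNReal.ofReal (1 - 2 * δ)
      ≤ μ {ω | (1 - ε) * ratSimOn x y z z' (Finset.univ : Finset U) A B
              ≤ ratSimOn x y z z' (Sk ω) (A ∩ Sk ω) (B ∩ Sk ω)
            ∧ ratSimOn x y z z' (Sk ω) (A ∩ Sk ω) (B ∩ Sk ω)
              ≤ (1 + ε) * ratSimOn x y z z' (Finset.univ : Finset U) A B} :=
  sampled_ratSim_approx_general ε δ r hε hε1 hδ hr hr1 x y z z' hx hy hz hzz' A B k μ X hmeas hindep
    h01 hq Sk hSk hk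
end

section
/- Let 0 < ε, δ, r < 1 and let A, B be nonempty subsets of a finite universe U with Jaccard similarity J(A,B) = |A∩B|/|A∪B| ≥ r. Fix k ∈ ℕ and let (X_i)_{i∈U} be independent Bernoulli random variables with Pr[X_i = 1] = 2^{-k}, S_k = {i : X_i = 1}, A_k = A ∩ S_k, B_k = B ∩ S_k. If 2^k ≤ (ε/5)²·δ·r·|A|, then with probability at least 1 − 2δ, (1−ε)·J(A,B) ≤ J(A_k, B_k) ≤ (1+ε)·J(A,B), where J(A_k,B_k) = |A_k∩B_k|/|A_k∪B_k| (taken to be 1 if A_k∪B_k = ∅). -/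
open MeasureTheory ProbabilityTheory

/-- The Jaccard similarity `|A∩B| / |A∪B|` of two finite sets, with the convention
that it equals `1` when `A ∪ B = ∅`. -/
noncomputable def jaccard {α : Type*} [DecidableEq α] (A B : Finset α) : ℝ :=
  if A ∪ B = ∅ then 1 else ((A ∩ B).card : ℝ) / ((A ∪ B).card : ℝ)

/-!
The sampled similarity is the ratio of the counts `#((A ∩ B) ∩ S_k)` and `#((A ∪ B) ∩ S_k)`.
Each count over a set of size `n` is a sum of pairwise independent Bernoulli(`p`) variables,
`p = 2^{-k}`, whose variance is at most its mean `p n`; by Chebyshev it leaves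
`[(1 - θ) p n, (1 + θ) p n]`, `θ = ε/5`, with probability at most `1 / (θ² p n)`, and the bound
on `2^k` together with `n ≥ #(A ∩ B) ≥ r #(A ∪ B) ≥ r #A` makes this at most `δ`. When neither
count leaves its interval, the ratio differs from `J(A, B)` by a factor between
`(1 - θ)/(1 + θ)` and `(1 + θ)/(1 - θ)`, both in `[1 - ε, 1 + ε]`.
-/

open Finset
open scoped ENNReal

section Bernoulli

variable {Ω : Type*} [MeasurableSpace Ω] {μ : Measure Ω} {p : ℝ}

lemma memLp_two_of_zero_or_one [IsFiniteMeasure μ] {X : Ω → ℝ} (hX : Measurable X)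
    (h01 : ∀ ω, X ω = 0 ∨ X ω = 1) : MemLp X 2 μ :=
  (memLp_top_of_bound hX.aestronglyMeasurable 1 (.of_forall fun ω => by
    rcases h01 ω with h | h <;> simp [h])).mono_exponent le_top

lemma integral_of_zero_or_one {X : Ω → ℝ} (hX : Measurable X) (h01 : ∀ ω, X ω = 0 ∨ X ω = 1)
    (hp : 0 ≤ p) (hq : μ {ω | X ω = 1} = ENNReal.ofReal p) : ∫ ω, X ω ∂μ = p := by
  calc ∫ ω, X ω ∂μ = ∫ ω, {ω | X ω = 1}.indicator 1 ω ∂μ := by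
        congr 1 with ω
        rcases h01 ω with h | h <;> simp [h]
    _ = p := by
        have hs : MeasurableSet {ω | X ω = 1} := hX (measurableSet_singleton 1)
        rw [integral_indicator_one hs, measureReal_def, hq, ENNReal.toReal_ofReal hp]

lemma variance_le_of_zero_or_one [IsProbabilityMeasure μ] {X : Ω → ℝ} (hX : Measurable X)
    (h01 : ∀ ω, X ω = 0 ∨ X ω = 1) (hp : 0 ≤ p) (hq : μ {ω | X ω = 1} = ENNReal.ofReal p) :
    variance X μ ≤ p := by
  have hsq : X ^ 2 = X := funext fun ω => by rcases h01 ω with h | h <;> simp [h]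
  have := variance_le_expectation_sq (μ := μ) hX.aestronglyMeasurable
  rwa [hsq, integral_of_zero_or_one hX h01 hp hq] at this

variable [IsProbabilityMeasure μ] {ι : Type*} {X : ι → Ω → ℝ}

lemma measure_le_abs_sum_sub_le (hX : ∀ i, Measurable (X i))
    (h01 : ∀ i ω, X i ω = 0 ∨ X i ω = 1) (hp : 0 ≤ p)
    (hq : ∀ i, μ {ω | X i ω = 1} = ENNReal.ofReal p)
    (hindep : Pairwise fun i j => IndepFun (X i) (X j) μ) (T : Finset ι) {c : ℝ} (hc : 0 < c) :
    μ {ω | c ≤ |∑ i ∈ T, X i ω - p * #T|} ≤ ENNReal.ofReal (p * #T / c ^ 2) := by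
  have hL2 : ∀ i ∈ T, MemLp (X i) 2 μ := fun i _ => memLp_two_of_zero_or_one (hX i) (h01 i)
  have hmean : μ[∑ i ∈ T, X i] = p * #T := by
    simp only [Finset.sum_apply]
    rw [integral_finsetSum T fun i hi => (hL2 i hi).integrable one_le_two]
    simp [integral_of_zero_or_one (hX _) (h01 _) hp (hq _), mul_comm]
  have hvar : variance (∑ i ∈ T, X i) μ ≤ p * #T := by
    rw [IndepFun.variance_sum hL2 fun i _ j _ hij => hindep hij]
    simpa [mul_comm] using sum_le_sum fun i (_ : i ∈ T) =>
      variance_le_of_zero_or_one (hX i) (h01 i) hp (hq i)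
  have hcheb := meas_ge_le_variance_div_sq (memLp_finsetSum' T hL2) hc
  rw [hmean] at hcheb
  simp only [Finset.sum_apply] at hcheb
  exact hcheb.trans (ENNReal.ofReal_le_ofReal (by gcongr))

lemma measure_lt_abs_sum_sub_le (hX : ∀ i, Measurable (X i))
    (h01 : ∀ i ω, X i ω = 0 ∨ X i ω = 1) (hp : 0 ≤ p)
    (hq : ∀ i, μ {ω | X i ω = 1} = ENNReal.ofReal p)
    (hindep : Pairwise fun i j => IndepFun (X i) (X j) μ) (T : Finset ι) {θ δ : ℝ} (hθ : 0 < θ)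
    (hT : 1 ≤ θ ^ 2 * δ * (p * #T)) :
    μ {ω | θ * (p * #T) < |∑ i ∈ T, X i ω - p * #T|} ≤ ENNReal.ofReal δ := by
  have hpT : 0 < p * #T :=
    lt_of_le_of_ne (by positivity) fun h => by rw [← h, mul_zero] at hT; linarith
  calc μ {ω | θ * (p * #T) < |∑ i ∈ T, X i ω - p * #T|}
      ≤ μ {ω | θ * (p * #T) ≤ |∑ i ∈ T, X i ω - p * #T|} :=
        measure_mono (Set.ofPred_subset_ofPred.2 fun _ => le_of_lt)
    _ ≤ ENNReal.ofReal (p * #T / (θ * (p * #T)) ^ 2) :=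
        measure_le_abs_sum_sub_le hX h01 hp hq hindep T (by positivity)
    _ ≤ ENNReal.ofReal δ := by
        gcongr
        rw [div_le_iff₀ (by positivity)]
        nlinarith

end Bernoulli

lemma ofReal_one_sub_le_measure {Ω : Type*} [MeasurableSpace Ω] {μ : Measure Ω}
    [IsProbabilityMeasure μ] {s : Set Ω} {q : ℝ} (hq : 0 ≤ q) (h : μ sᶜ ≤ ENNReal.ofReal q) :
    ENNReal.ofReal (1 - q) ≤ μ s := by
  rw [ENNReal.ofReal_sub _ hq, ENNReal.ofReal_one, tsub_le_iff_right]
  calc 1 = μ Set.univ := measure_univ.symm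
    _ ≤ μ s + μ sᶜ := measure_univ_le_add_compl s
    _ ≤ μ s + ENNReal.ofReal q := by gcongr

lemma div_mem_Icc_of_abs_sub_le {a b x y θ ε : ℝ} (hx : 0 ≤ x) (hy : 0 < y)
    (hθε : 3 * θ ≤ ε) (hε : ε ≤ 1) (ha : |a - x| ≤ θ * x) (hb : |b - y| ≤ θ * y) :
    a / b ∈ Set.Icc ((1 - ε) * (x / y)) ((1 + ε) * (x / y)) := by
  obtain ⟨ha₁, ha₂⟩ := abs_le.1 ha
  obtain ⟨hb₁, hb₂⟩ := abs_le.1 hb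
  have hθ : 0 ≤ θ := nonneg_of_mul_nonneg_left ((abs_nonneg _).trans hb) hy
  have hb0 : 0 < b := by nlinarith
  have hxy : 0 ≤ x * y := mul_nonneg hx hy.le
  rw [Set.mem_Icc, mul_div_assoc', mul_div_assoc', div_le_div_iff₀ hy hb0,
    div_le_div_iff₀ hb0 hy]
  constructor
  · calc (1 - ε) * x * b ≤ (1 - ε) * x * ((1 + θ) * y) := by
          gcongr
          · nlinarith
      _ = (1 - ε) * (1 + θ) * (x * y) := by ring
      _ ≤ (1 - θ) * (x * y) := by gcongr; nlinarith
      _ ≤ a * y := by nlinarith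
  · calc a * y ≤ (1 + θ) * (x * y) := by nlinarith
      _ ≤ (1 + ε) * (1 - θ) * (x * y) := by gcongr; nlinarith
      _ = (1 + ε) * x * ((1 - θ) * y) := by ring
      _ ≤ (1 + ε) * x * b := by
          gcongr
          · nlinarith
          · linarith

section Jaccard

variable {α : Type*} [DecidableEq α]

lemma jaccard_eq_div {A B : Finset α} (h : (A ∪ B).Nonempty) :
    jaccard A B = (#(A ∩ B) : ℝ) / #(A ∪ B) :=
  if_neg h.ne_empty

lemma natCast_card_inter_eq_sum {T S : Finset α} {x : α → ℝ} (hS : ∀ i, i ∈ S ↔ x i = 1)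
    (h01 : ∀ i, x i = 0 ∨ x i = 1) : (#(T ∩ S) : ℝ) = ∑ i ∈ T, x i := by
  rw [← filter_mem_eq_inter, natCast_card_filter]
  exact sum_congr rfl fun i _ => by rcases h01 i with h | h <;> simp [hS, h]

lemma jaccard_inter_inter_mem_Icc {A B S : Finset α} (hAB : (A ∪ B).Nonempty) {c θ ε : ℝ}
    (hc : 0 < c) (hθε : 3 * θ ≤ ε) (hε : ε ≤ 1)
    (hinter : |(#(A ∩ B ∩ S) : ℝ) - c * #(A ∩ B)| ≤ θ * (c * #(A ∩ B)))
    (hunion : |(#((A ∪ B) ∩ S) : ℝ) - c * #(A ∪ B)| ≤ θ * (c * #(A ∪ B))) :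
    jaccard (A ∩ S) (B ∩ S) ∈ Set.Icc ((1 - ε) * jaccard A B) ((1 + ε) * jaccard A B) := by
  have hunion_pos : (0 : ℝ) < #(A ∪ B) := by exact_mod_cast hAB.card_pos
  have hratio := div_mem_Icc_of_abs_sub_le (by positivity) (by positivity) hθε hε hinter hunion
  rw [mul_div_mul_left _ _ hc.ne'] at hratio
  have hsampled : ((A ∩ S) ∪ (B ∩ S)).Nonempty := by
    rw [← union_inter_distrib_right, ← card_pos, ← Nat.cast_pos (α := ℝ)]
    nlinarith [(abs_le.1 hunion).1, mul_pos hc hunion_pos]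
  rwa [jaccard_eq_div hAB, jaccard_eq_div hsampled, ← union_inter_distrib_right,
    ← inter_inter_distrib_right]

end Jaccard

theorem sampled_jaccard_approx_general
    (ε δ r : ℝ) (hε : 0 < ε) (hε1 : ε < 1) (hδ : 0 < δ)
    (hr : 0 < r)
    {U : Type*} [DecidableEq U] (A B : Finset U)
    (hA : A.Nonempty)
    (hsim : r ≤ jaccard A B)
    (k : ℕ)
    {Ω : Type*} [MeasurableSpace Ω] (μ : Measure Ω) [IsProbabilityMeasure μ]
    (X : U → Ω → ℝ) (hmeas : ∀ i, Measurable (X i))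
    (hindep : iIndepFun X μ)
    (h01 : ∀ i ω, X i ω = 0 ∨ X i ω = 1)
    (hq : ∀ i, μ {ω | X i ω = 1} = ENNReal.ofReal ((1 / 2 : ℝ) ^ k))
    (Sk : Ω → Finset U) (hSk : ∀ ω i, i ∈ Sk ω ↔ X i ω = 1)
    (hk : (2 : ℝ) ^ k ≤ (ε / 5) ^ 2 * δ * r * (A.card : ℝ)) :
    ENNReal.ofReal (1 - 2 * δ)
      ≤ μ {ω | (1 - ε) * jaccard A B ≤ jaccard (A ∩ Sk ω) (B ∩ Sk ω)
            ∧ jaccard (A ∩ Sk ω) (B ∩ Sk ω) ≤ (1 + ε) * jaccard A B} := by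
  set p : ℝ := (1 / 2) ^ k
  set θ : ℝ := ε / 5 with hθ
  have hAB : (A ∪ B).Nonempty := hA.mono subset_union_left
  have hr_union : r * #(A ∪ B) ≤ (#(A ∩ B) : ℝ) := by
    rwa [jaccard_eq_div hAB, le_div_iff₀ (by exact_mod_cast hAB.card_pos)] at hsim
  have hinter : 1 ≤ θ ^ 2 * δ * (p * #(A ∩ B)) := by
    have hA_union : (#A : ℝ) ≤ #(A ∪ B) := by exact_mod_cast card_le_card subset_union_left
    have hp : p * 2 ^ k = 1 := by rw [← mul_pow]; norm_num
    calc (1 : ℝ) = p * 2 ^ k := hp.symm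
      _ ≤ p * (θ ^ 2 * δ * r * #A) := by gcongr
      _ ≤ p * (θ ^ 2 * δ * r * #(A ∪ B)) := by gcongr
      _ = θ ^ 2 * δ * p * (r * #(A ∪ B)) := by ring
      _ ≤ θ ^ 2 * δ * p * #(A ∩ B) := by gcongr
      _ = θ ^ 2 * δ * (p * #(A ∩ B)) := by ring
  have hunion : 1 ≤ θ ^ 2 * δ * (p * #(A ∪ B)) :=
    hinter.trans (by gcongr; exact inter_subset_union)
  have hbad T := measure_lt_abs_sum_sub_le hmeas h01 (by positivity) hq
    (fun _ _ hij => hindep.indepFun hij) T (θ := θ) (δ := δ) (by positivity)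
  refine ofReal_one_sub_le_measure (by positivity) ?_
  calc _ ≤ μ ({ω | θ * (p * #(A ∩ B)) < |∑ i ∈ A ∩ B, X i ω - p * #(A ∩ B)|}
        ∪ {ω | θ * (p * #(A ∪ B)) < |∑ i ∈ A ∪ B, X i ω - p * #(A ∪ B)|}) := by
        refine measure_mono (Set.compl_subset_comm.1 fun ω hω => ?_)
        simp only [Set.mem_compl_iff, Set.mem_union, Set.mem_ofPred_eq, not_or, not_lt,
          ← natCast_card_inter_eq_sum (hSk ω) (h01 · ω)] at hω
        exact jaccard_inter_inter_mem_Icc hAB (by positivity) (by rw [hθ]; linarith) hε1.le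
          hω.1 hω.2
    _ ≤ ENNReal.ofReal δ + ENNReal.ofReal δ :=
        (measure_union_le _ _).trans (add_le_add (hbad _ hinter) (hbad _ hunion))
    _ = ENNReal.ofReal (2 * δ) := by rw [← ENNReal.ofReal_add hδ.le hδ.le, two_mul]

/-- subsampling preserves the Jaccard similarity up to a `(1±ε)` factor
with probability at least `1 - 2δ`, provided `J(A,B) ≥ r` and
`2^k ≤ (ε/5)²·δ·r·|A|`. Here `S_k = {i : X_i = 1}` for independent Bernoulli(`2^{-k}`)
variables `X_i`, `A_k = A ∩ S_k`, `B_k = B ∩ S_k`. -/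
theorem sampled_jaccard_approx
    (ε δ r : ℝ) (hε : 0 < ε) (hε1 : ε < 1) (hδ : 0 < δ) (hδ1 : δ < 1)
    (hr : 0 < r) (hr1 : r < 1)
    {U : Type*} [Fintype U] [DecidableEq U] (A B : Finset U)
    (hA : A.Nonempty) (hB : B.Nonempty)
    (hsim : r ≤ jaccard A B)
    (k : ℕ)
    {Ω : Type*} [MeasurableSpace Ω] (μ : Measure Ω) [IsProbabilityMeasure μ]
    (X : U → Ω → ℝ) (hmeas : ∀ i, Measurable (X i))
    (hindep : iIndepFun X μ)
    (h01 : ∀ i ω, X i ω = 0 ∨ X i ω = 1)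
    (hq : ∀ i, μ {ω | X i ω = 1} = ENNReal.ofReal ((1 / 2 : ℝ) ^ k))
    (Sk : Ω → Finset U) (hSk : ∀ ω i, i ∈ Sk ω ↔ X i ω = 1)
    (hk : (2 : ℝ) ^ k ≤ (ε / 5) ^ 2 * δ * r * (A.card : ℝ)) :
    ENNReal.ofReal (1 - 2 * δ)
      ≤ μ {ω | (1 - ε) * jaccard A B ≤ jaccard (A ∩ Sk ω) (B ∩ Sk ω)
            ∧ jaccard (A ∩ Sk ω) (B ∩ Sk ω) ≤ (1 + ε) * jaccard A B} :=
  sampled_jaccard_approx_general ε δ r hε hε1 hδ hr A B hA hsim k μ X hmeas hindep h01 hq Sk hSk hk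
end
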